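/- Combining the previous two facts: for a scalar system with rate R = log(1 + SINR) where SINR = |h·w̄|²/(I + σ²), one has R = −log(e_mmse) where e_mmse = min_u e(u) = 1/(1 + SINR); hence log(1 + SINR) = min over (u, ρ>0) of (ρ·e(u) − log ρ) subtracted from 1, i.e. log(1+SINR) = 1 − min_{u,ρ>0}(ρ·e(u) − log ρ). -/

import Mathlib

/-!
Completing the square, `(‖a‖² + N) e(u) = N + ‖(‖a‖² + N) u − a‖²` with `a = h̄ w` and
`N = I + σ²`, so the MSE is minimised at the Wiener receiver `u = a / (‖a‖² + N)`, with value
`N / (‖a‖² + N) = 1 / (1 + SINR)`. The logarithm enters through `log x ≤ x − 1`: for `m > 0`,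
`ρ m − log ρ ≥ 1 + log m` with equality at `ρ = 1 / m`.
-/

open Complex ComplexConjugate Set

lemma mse_mul_eq (a : ℂ) (N : ℝ) (u : ℂ) :
    (‖a‖ ^ 2 + N) * (‖1 - conj u * a‖ ^ 2 + ‖u‖ ^ 2 * N)
      = N + ‖((‖a‖ ^ 2 + N : ℝ) : ℂ) * u - a‖ ^ 2 := by
  simp only [Complex.sq_norm, normSq_apply, sub_re, sub_im, mul_re, mul_im, one_re, one_im,
    ofReal_re, ofReal_im, conj_re, conj_im]
  ring

lemma isLeast_mse (a : ℂ) {N : ℝ} (hN : 0 < N) :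
    IsLeast (range fun u : ℂ => ‖1 - conj u * a‖ ^ 2 + ‖u‖ ^ 2 * N) (N / (‖a‖ ^ 2 + N)) := by
  have hS : 0 < ‖a‖ ^ 2 + N := by positivity
  refine ⟨⟨a / ((‖a‖ ^ 2 + N : ℝ) : ℂ), ?_⟩, ?_⟩
  · have hcancel : ((‖a‖ ^ 2 + N : ℝ) : ℂ) * (a / ((‖a‖ ^ 2 + N : ℝ) : ℂ)) - a = 0 := by
      rw [mul_div_cancel₀ a (ofReal_ne_zero.mpr hS.ne'), sub_self]
    have key := mse_mul_eq a N (a / ((‖a‖ ^ 2 + N : ℝ) : ℂ))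
    rw [hcancel, norm_zero] at key
    rw [eq_div_iff hS.ne']
    linarith
  · rintro _ ⟨u, rfl⟩
    have key := mse_mul_eq a N u
    rw [div_le_iff₀ hS]
    nlinarith [norm_nonneg (((‖a‖ ^ 2 + N : ℝ) : ℂ) * u - a)]

lemma isLeast_mul_sub_log {α : Type*} {f : α → ℝ} {m : ℝ} (hf : IsLeast (range f) m)
    (hm : 0 < m) :
    IsLeast {x : ℝ | ∃ (u : α) (ρ : ℝ), 0 < ρ ∧ x = ρ * f u - Real.log ρ} (1 + Real.log m) := by
  obtain ⟨⟨u₀, hu₀⟩, hlow⟩ := hf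
  refine ⟨⟨u₀, 1 / m, by positivity, ?_⟩, ?_⟩
  · rw [hu₀, one_div, Real.log_inv, inv_mul_cancel₀ hm.ne']
    ring
  · rintro _ ⟨u, ρ, hρ, rfl⟩
    have hmu : m ≤ f u := hlow ⟨u, rfl⟩
    have hlog : Real.log (ρ * m) ≤ ρ * m - 1 := Real.log_le_sub_one_of_pos (by positivity)
    rw [Real.log_mul hρ.ne' hm.ne'] at hlog
    nlinarith

/-- Scalar WMMSE rate–MSE equivalence: with e(u) = |1 − ū·h̄·w|² + |u|²·(I + σ²),
SINR = |h·w̄|²/(I + σ²) and e_mmse = min_u e(u) = 1/(1 + SINR), one has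
log(1 + SINR) = −log e_mmse = 1 − min_{u,ρ>0}(ρ·e(u) − log ρ). -/
theorem stmt_10 (h w : ℂ) (I σsq : ℝ) (hI : 0 ≤ I) (hσ : 0 < σsq)
    (e : ℂ → ℝ)
    (he : ∀ u, e u = ‖1 - (starRingEnd ℂ) u * (starRingEnd ℂ) h * w‖ ^ 2
        + ‖u‖ ^ 2 * (I + σsq))
    (SINR : ℝ) (hSINR : SINR = (‖h * (starRingEnd ℂ) w‖) ^ 2 / (I + σsq))
    (emmse : ℝ) (hmm : IsLeast {x : ℝ | ∃ u : ℂ, x = e u} emmse) :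
    emmse = 1 / (1 + SINR) ∧
    Real.log (1 + SINR) = - Real.log emmse ∧
    Real.log (1 + SINR) =
      1 - sInf {x : ℝ | ∃ (u : ℂ) (ρ : ℝ), 0 < ρ ∧ x = ρ * e u - Real.log ρ} := by
  have hN : 0 < I + σsq := by positivity
  have hrange : {x : ℝ | ∃ u : ℂ, x = e u} = range e := by ext; simp [eq_comm]
  have he' : e = fun u => ‖1 - conj u * (conj h * w)‖ ^ 2 + ‖u‖ ^ 2 * (I + σsq) := by
    funext u; rw [he, mul_assoc]
  have hSINR' : SINR = ‖conj h * w‖ ^ 2 / (I + σsq) := by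
    rw [hSINR, norm_mul, norm_mul, norm_conj, norm_conj, mul_comm]
  rw [hrange] at hmm
  have hmin : emmse = (I + σsq) / (‖conj h * w‖ ^ 2 + (I + σsq)) :=
    hmm.unique (he' ▸ isLeast_mse _ hN)
  have hpos : 0 < emmse := by
    rw [hmin]; positivity
  have hemmse : emmse = 1 / (1 + SINR) := by
    rw [hmin, hSINR']
    field_simp
    ring
  have hrate : Real.log (1 + SINR) = - Real.log emmse := by
    rw [hemmse, one_div, Real.log_inv, neg_neg]
  refine ⟨hemmse, hrate, ?_⟩
  rw [(isLeast_mul_sub_log hmm hpos).csInf_eq, hrate]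
  ring
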